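/- arXiv:1405.1770 — 4 statements merged into one kernel-verified Lean document; each statement's English description precedes it below -/
import Mathlib

section
/- For integers $d_1, d_2$ and a prime $p$, the twisted Burnside Mackey functors $A\langle d_1\rangle$ and $A\langle d_2\rangle$ over a commutative ring $k$ are isomorphic if and only if there exists a unit $u \in k$ and an element $x \in k$ such that $d_1 = u d_2 + p x$ in $k$. -/
/-- Lemma 2.2.14 (Lewis): the twisted Burnside Mackey functors `A⟨d₁⟩` and `A⟨d₂⟩` over a
commutative ring `k` (for the group `C_p`, `p` prime) are isomorphic iff `d₁ = u d₂ + p x`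
for some unit `u` and element `x` of `k`.  An isomorphism is a pair of `k`-linear
equivalences `eb : k ⊕ k ≃ k ⊕ k` (level `•`) and `ef : k ≃ k` (level `◦`) commuting with
the restriction `(0 1)` and the transfers `(dᵢ, p)ᵀ`; the `C_p`-actions are trivial. -/
theorem stmt0 (k : Type*) [CommRing k] (p : ℕ) (hp : p.Prime) (d₁ d₂ : ℤ) :
    (∃ (eb : (k × k) ≃ₗ[k] (k × k)) (ef : k ≃ₗ[k] k),
        (∀ v : k × k, (eb v).2 = ef v.2) ∧
        (∀ x : k, eb (((d₁ : k) * x, (p : k) * x) : k × k)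
          = ((d₂ : k) * ef x, (p : k) * ef x)) ) ↔
      ∃ u x : k, IsUnit u ∧ (d₁ : k) = u * (d₂ : k) + (p : k) * x := by
  constructor
  · rintro ⟨eb, ef, h2, ht⟩
    set c := ef 1 with hc
    have hef : ∀ t : k, ef t = t * c := by
      intro t
      have := ef.map_smul t 1
      simpa [smul_eq_mul, hc] using this
    set α := (eb (1, 0)).1 with hα
    set β := (eb (0, 1)).1 with hβ
    have heb1 : eb ((1 : k), (0 : k)) = (α, 0) := by
      have h := h2 (1, 0)
      have h0 : (eb ((1 : k), (0 : k))).2 = 0 := by rw [h]; exact map_zero ef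
      rw [Prod.ext_iff]; exact ⟨rfl, h0⟩
    have heb2 : eb ((0 : k), (1 : k)) = (β, c) := by
      have h : (eb ((0 : k), (1 : k))).2 = c := by rw [h2 (0, 1)]
      rw [Prod.ext_iff]; exact ⟨rfl, h⟩
    have hdec : ∀ a b : k, eb (a, b) = (a * α + b * β, b * c) := by
      intro a b
      have : (a, b) = a • ((1 : k), (0 : k)) + b • ((0 : k), (1 : k)) := by
        simp [Prod.ext_iff]
      rw [this, map_add, map_smul, map_smul, heb1, heb2]
      simp only [Prod.smul_mk, Prod.mk_add_mk, smul_eq_mul, Prod.mk.injEq]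
      exact ⟨trivial, by ring⟩
    -- eb.symm (1,0)
    obtain ⟨s, t, hst⟩ : ∃ s t : k, eb.symm (1, 0) = (s, t) := ⟨_, _, rfl⟩
    have happ : eb (s, t) = (1, 0) := by rw [← hst]; exact eb.apply_symm_apply _
    have ht0 : t = 0 := by
      have h := h2 (s, t)
      rw [happ] at h
      have : ef t = ef 0 := by simp [← h]
      exact ef.injective this
    have hsα : s * α = 1 := by
      have := hdec s t
      rw [happ, ht0] at this
      have h1 := congrArg Prod.fst this
      simpa using h1.symm
    -- transfer condition at 1
    have htr : (d₁ : k) * α + (p : k) * β = (d₂ : k) * c := by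
      have h := ht 1
      rw [mul_one, mul_one, hdec] at h
      have h1 := congrArg Prod.fst h
      simpa [hef] using h1
    refine ⟨s * c, -(s * β), ?_, ?_⟩
    · refine IsUnit.of_mul_eq_one (α * ef.symm 1) ?_
      have hcc : c * ef.symm 1 = 1 := by
        have h := hef (ef.symm 1)
        rw [ef.apply_symm_apply] at h
        rw [mul_comm]; exact h.symm
      calc s * c * (α * ef.symm 1) = (s * α) * (c * ef.symm 1) := by ring
        _ = 1 := by rw [hsα, hcc, one_mul]
    · linear_combination s * htr - (d₁ : k) * hsα
  · rintro ⟨u, x, hu, hd⟩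
    obtain ⟨uu, rfl⟩ := hu
    set u : k := (uu : k) with hu'
    set v : k := ((uu⁻¹ : kˣ) : k) with hv
    have huv : u * v = 1 := by rw [hu', hv, ← Units.val_mul, mul_inv_cancel, Units.val_one]
    have hvu : v * u = 1 := by rw [mul_comm]; exact huv
    let ef : k ≃ₗ[k] k :=
      { toFun := fun t => u * t
        map_add' := by intro a b; ring
        map_smul' := by intro m a; simp only [smul_eq_mul, RingHom.id_apply]; ring
        invFun := fun t => v * t
        left_inv := by intro t; show v * (u * t) = t; rw [← mul_assoc, hvu, one_mul]
        right_inv := by intro t; show u * (v * t) = t; rw [← mul_assoc, huv, one_mul] }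
    let eb : (k × k) ≃ₗ[k] (k × k) :=
      { toFun := fun ab => (ab.1 - x * ab.2, u * ab.2)
        map_add' := by
          intro a b
          simp only [Prod.fst_add, Prod.snd_add, Prod.mk_add_mk, Prod.mk.injEq]
          constructor <;> ring
        map_smul' := by
          intro m a
          simp only [Prod.smul_fst, Prod.smul_snd, Prod.smul_mk, smul_eq_mul,
            RingHom.id_apply, Prod.mk.injEq]
          constructor <;> ring
        invFun := fun ab => (ab.1 + x * (v * ab.2), v * ab.2)
        left_inv := by
          intro ab
          rw [Prod.ext_iff]
          constructor
          · show ab.1 - x * ab.2 + x * (v * (u * ab.2)) = ab.1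
            linear_combination x * ab.2 * hvu
          · show v * (u * ab.2) = ab.2
            linear_combination ab.2 * hvu
        right_inv := by
          intro ab
          rw [Prod.ext_iff]
          constructor
          · show ab.1 + x * (v * ab.2) - x * (v * ab.2) = ab.1
            ring
          · show u * (v * ab.2) = ab.2
            linear_combination ab.2 * huv }
    refine ⟨eb, ef, fun w => rfl, ?_⟩
    intro t
    show ((d₁ : k) * t - x * ((p : k) * t), u * ((p : k) * t))
        = ((d₂ : k) * (u * t), (p : k) * (u * t))
    rw [Prod.ext_iff]
    constructor
    · linear_combination t * hd
    · ring
end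

section
/- For any integers $d_1, d_2$ both coprime to the prime $p$, there is an isomorphism of Mackey functors $A\langle d_1\rangle \oplus \langle k\rangle \cong A\langle d_2\rangle \oplus \langle k\rangle$, where $\langle k\rangle$ is the Mackey functor with value $k$ at the fixed level, $0$ at the free level, and all structure maps zero. Concretely: there exists an invertible $3\times 3$ integer matrix $X$ with $X\cdot(d_2,p,0)^T = (d_1,p,0)^T$ and $(0,1,0)\cdot X = (0,1,0)$. -/
/-- Lemma 2.2.15 (Lewis): for integers `d₁, d₂` coprime to the prime `p`, there is an
isomorphism `A⟨d₁⟩ ⊕ ⟨k⟩ ≅ A⟨d₂⟩ ⊕ ⟨k⟩`.  Concretely, there is an invertible `3 × 3`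
integer matrix `X` with `X ⬝ (d₂, p, 0)ᵀ = (d₁, p, 0)ᵀ` and `(0,1,0) ⬝ X = (0,1,0)`. -/
theorem stmt1 (p : ℕ) (hp : p.Prime) (d₁ d₂ : ℤ)
    (h1 : IsCoprime d₁ (p : ℤ)) (h2 : IsCoprime d₂ (p : ℤ)) :
    ∃ X : Matrix (Fin 3) (Fin 3) ℤ, IsUnit X.det ∧
      X.mulVec ![d₂, (p : ℤ), 0] = ![d₁, (p : ℤ), 0] ∧
      Matrix.vecMul ![0, 1, 0] X = ![0, 1, 0] := by
  obtain ⟨a₂, b₂, hab⟩ := h2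
  have ha₂ : IsCoprime (a₂ : ℤ) (p : ℤ) := ⟨d₂, b₂, by linarith [hab]⟩
  have hq : IsCoprime (d₁ * a₂) (p : ℤ) := h1.mul_left ha₂
  obtain ⟨u, v, huv⟩ := hq
  refine ⟨![![d₁ * a₂, d₁ * b₂, -v], ![0, 1, 0], ![(p : ℤ), -d₂, u]], ?_, ?_, ?_⟩
  · erw [Matrix.det_fin_three]
    simp only [Matrix.cons_val', Matrix.cons_val_zero, Matrix.cons_val_one, Matrix.head_cons,
      Matrix.empty_val', Matrix.cons_val_fin_one, Matrix.head_fin_const,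
      Matrix.cons_val_two, Matrix.tail_cons]
    have : d₁ * a₂ * 1 * u - d₁ * a₂ * 0 * -d₂ - d₁ * b₂ * 0 * u + d₁ * b₂ * 0 * (p:ℤ)
        + -v * 0 * -d₂ - -v * 1 * (p:ℤ) = 1 := by linear_combination huv
    rw [this]
    exact isUnit_one
  · have hd : d₁ * a₂ * d₂ + d₁ * b₂ * (p:ℤ) = d₁ := by linear_combination d₁ * hab
    funext i
    fin_cases i <;>
      simp [Matrix.mulVec, dotProduct, Fin.sum_univ_three] <;> linarith [hd]
  · funext i
    fin_cases i <;>
      simp [Matrix.vecMul, dotProduct, Fin.sum_univ_three]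
end

section
/- If $d = px$ for some $x$ in a commutative ring $k$ and $p$ is a prime, then the twisted Burnside Mackey functor $A\langle d\rangle$ splits as a direct sum $\langle k\rangle \oplus L$, where $L = \mathscr{L}(k)$ is the Mackey functor with $L(\bullet) = k$, $L(\circ) = k$, restriction the identity and transfer multiplication by $p$. -/
/-- If `d = p x` in a commutative ring `k` (`p` prime), then the twisted Burnside Mackey
functor `A⟨d⟩` (levels `k ⊕ k` and `k`, restriction `(0 1)`, transfer `(d, p)ᵀ`) splits as
`⟨k⟩ ⊕ 𝓛(k)`, where `⟨k⟩ ⊕ 𝓛(k)` has levels `k ⊕ k` and `k`, restriction `(0 1)` and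
transfer `(0, p)ᵀ`.  The isomorphism is a pair of `k`-linear equivalences commuting with
restrictions and transfers. -/
theorem stmt2 (k : Type*) [CommRing k] (p : ℕ) (hp : p.Prime) (d x : k)
    (hd : d = (p : k) * x) :
    ∃ (eb : (k × k) ≃ₗ[k] (k × k)) (ef : k ≃ₗ[k] k),
      (∀ v : k × k, (eb v).2 = ef v.2) ∧
      (∀ y : k, eb ((d * y, (p : k) * y) : k × k) = ((0 : k), (p : k) * ef y)) := by
  refine ⟨{ toFun := fun v => (v.1 - x * v.2, v.2)
            invFun := fun v => (v.1 + x * v.2, v.2)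
            map_add' := by intro a b; simp [Prod.ext_iff]; ring
            map_smul' := by intro c v; simp [Prod.ext_iff]; ring
            left_inv := by intro v; simp
            right_inv := by intro v; simp },
          LinearEquiv.refl k k, ?_, ?_⟩
  · intro v; rfl
  · intro y
    simp [Prod.ext_iff, hd]
    ring
end

section
/- If $p$ is invertible in the commutative ring $k$, then for any integer $d$ coprime to $p$ there is an isomorphism of Mackey functors $A\langle d\rangle \cong \langle k\rangle \oplus \mathscr{L}(k)$. -/
/-- If `p` is invertible in the commutative ring `k`, then for any integer `d` coprime to
the prime `p` there is an isomorphism of Mackey functors `A⟨d⟩ ≅ ⟨k⟩ ⊕ 𝓛(k)`: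
a pair of `k`-linear equivalences intertwining the restriction `(0 1)` (both sides) and
carrying the transfer `(d, p)ᵀ` of `A⟨d⟩` to the transfer `(0, p)ᵀ` of `⟨k⟩ ⊕ 𝓛(k)`. -/
theorem stmt3 (k : Type*) [CommRing k] (p : ℕ) (hp : p.Prime) (hu : IsUnit (p : k))
    (d : ℤ) (hd : IsCoprime d (p : ℤ)) :
    ∃ (eb : (k × k) ≃ₗ[k] (k × k)) (ef : k ≃ₗ[k] k),
      (∀ v : k × k, (eb v).2 = ef v.2) ∧
      (∀ y : k, eb (((d : k) * y, (p : k) * y) : k × k) = ((0 : k), (p : k) * ef y)) := by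
  obtain ⟨u, hup⟩ := hu
  set c : k := (d : k) * (↑u⁻¹ : k) with hc
  have hcp : c * (p : k) = (d : k) := by
    rw [hc, ← hup, mul_assoc, Units.inv_mul, mul_one]
  refine ⟨{ toFun := fun v => (v.1 - c * v.2, v.2),
            invFun := fun v => (v.1 + c * v.2, v.2),
            map_add' := by intro a b; simp [Prod.ext_iff]; ring,
            map_smul' := by intro m a; simp [Prod.ext_iff, smul_sub, mul_comm, mul_left_comm, mul_sub, mul_assoc],
            left_inv := by intro v; simp,
            right_inv := by intro v; simp },
          LinearEquiv.refl k k, fun v => rfl, fun y => ?_⟩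
  simp only [LinearEquiv.coe_mk, LinearMap.coe_mk, AddHom.coe_mk, LinearEquiv.refl_apply, Prod.mk.injEq]
  constructor
  · rw [← mul_assoc, hcp]; ring
  · trivial
end
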